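/- Consider the balanced mixture where class y ∈ {-1, +1} has distribution N(y A_y μ, A_y²), with A_y = T(d; a_y, 1, a_y) invertible symmetric tridiagonal Toeplitz matrices. The Bayes optimal decision boundary is the quadric {x : xᵀAx + bᵀx + c = 0} with A = A₋₁⁻² − A₁⁻², b = 2(A₋₁⁻¹ + A₁⁻¹)μ, and c = 2Σᵢ [ln(1 + 2a₋₁cos(iπ/(d+1))) − ln(1 + 2a₁cos(iπ/(d+1)))]. -/

import Mathlib

/-!
The Bayes boundary is the zero set of the log-likelihood ratio of the two Gaussians. Since
`A_y` is symmetric, the Mahalanobis term `(x - A μ)ᵀ A⁻² (x - A μ)` expands to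
`xᵀ A⁻² x - 2 μᵀ A⁻¹ x + μᵀ μ`, and the `μᵀ μ` terms of the two classes cancel, leaving the quadric
with the stated `A` and `b`; the constant `c` is the difference of the log-determinants. Expanding
`det T(n; a, 1, a)` along its first row gives `Dₙ₊₂ = Dₙ₊₁ - a² Dₙ`, the recurrence of
`(-a)ⁿ Uₙ(-1/(2a))` for the Chebyshev polynomials of the second kind, whose roots
`cos (kπ/(n+1))` give `Dₙ = ∏ₖ (1 + 2a cos (kπ/(n+1)))`, positive for `|a| < 1/2`.
-/

open Matrix Real

/-- Density of the multivariate Gaussian `N(m, S)` on `ℝ^d` (for `S` positive definite). -/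
noncomputable def gaussPDF {d : ℕ} (m : Fin d → ℝ) (S : Matrix (Fin d) (Fin d) ℝ)
    (x : Fin d → ℝ) : ℝ :=
  ((2 * π) ^ (d : ℝ) * S.det) ^ (-(1 : ℝ) / 2) *
    Real.exp (-((x - m) ⬝ᵥ (S⁻¹ *ᵥ (x - m))) / 2)

/-- The `d × d` symmetric tridiagonal Toeplitz matrix `T(d; a, 1, a)`. -/
def triToeplitz (d : ℕ) (a : ℝ) : Matrix (Fin d) (Fin d) ℝ :=
  Matrix.of fun i j =>
    if (i : ℕ) = (j : ℕ) then (1 : ℝ)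
    else if (i : ℕ) + 1 = (j : ℕ) ∨ (j : ℕ) + 1 = (i : ℕ) then a else 0

open Finset

theorem Polynomial.Chebyshev.eval_U_real_eq_prod (n : ℕ) (x : ℝ) :
    (U ℝ n).eval x = 2 ^ n * ∏ k ∈ range n, (x - cos ((k + 1) * π / (n + 1))) := by
  have hinj : Set.InjOn (fun k : ℕ ↦ cos ((k + 1) * π / (n + 1))) (range n) :=
    (range n).nodup_map_iff_injOn.mp (roots_U_real_nodup n)
  have hcard : Multiset.card (U ℝ n).roots = (U ℝ n).natDegree := by
    rw [natDegree_U_natCast, roots_U_real, card_val, card_image_of_injOn hinj, card_range]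
  rw [← C_leadingCoeff_mul_prod_multiset_X_sub_C hcard, leadingCoeff_U_natCast, roots_U_real,
    ← prod_eq_multiset_prod, prod_image hinj, eval_mul, eval_C, eval_prod]
  simp

lemma triToeplitz_apply {n : ℕ} (a : ℝ) (i j : Fin n) :
    triToeplitz n a i j =
      if (i : ℕ) = j then 1 else if (i : ℕ) + 1 = j ∨ (j : ℕ) + 1 = i then a else 0 := rfl

lemma triToeplitz_isSymm (n : ℕ) (a : ℝ) : (triToeplitz n a).IsSymm := by
  ext i j
  simp only [transpose_apply, triToeplitz_apply]
  grind

lemma triToeplitz_submatrix_succ (n : ℕ) (a : ℝ) :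
    (triToeplitz (n + 1) a).submatrix Fin.succ Fin.succ = triToeplitz n a := by
  ext i j
  simp only [submatrix_apply, triToeplitz_apply, Fin.val_succ]
  grind

lemma det_triToeplitz_add_two (n : ℕ) (a : ℝ) :
    (triToeplitz (n + 2) a).det
      = (triToeplitz (n + 1) a).det - a ^ 2 * (triToeplitz n a).det := by
  set T := triToeplitz (n + 2) a
  have hcols : (Fin.succ 0).succAbove ∘ Fin.succ = Fin.succ ∘ (Fin.succ : Fin n → Fin (n + 1)) :=
    funext (Fin.succ_succAbove_succ 0)
  have hminor : (T.submatrix Fin.succ (Fin.succ 0).succAbove).det = a * (triToeplitz n a).det := by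
    rw [det_succ_column_zero, Fin.sum_univ_succ, sum_eq_zero, add_zero, Fin.succAbove_zero,
      submatrix_submatrix, hcols, ← submatrix_submatrix, triToeplitz_submatrix_succ,
      triToeplitz_submatrix_succ]
    · simp [T, triToeplitz_apply]
    · intro i _
      simp [T, triToeplitz_apply]
  rw [det_succ_row_zero, Fin.sum_univ_succ, Fin.sum_univ_succ, sum_eq_zero, add_zero,
    Fin.succAbove_zero, triToeplitz_submatrix_succ, hminor]
  · simp [T, triToeplitz_apply, sub_eq_add_neg, sq, mul_assoc]
  · intro j _
    simp [T, triToeplitz_apply]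

open Polynomial in
lemma det_triToeplitz_eq_eval_U {a : ℝ} (ha : a ≠ 0) (n : ℕ) :
    (triToeplitz n a).det = (-a) ^ n * (Chebyshev.U ℝ n).eval (-(2 * a)⁻¹) := by
  induction n using Nat.twoStepInduction with
  | zero => simp
  | one => simp [det_unique, triToeplitz_apply, mul_left_comm a, ha]
  | more n ih₀ ih₁ =>
    rw [det_triToeplitz_add_two, ih₀, ih₁, show ((n + 2 : ℕ) : ℤ) = n + 2 by push_cast; ring,
      Chebyshev.U_add_two]
    simp only [eval_sub, eval_mul, eval_X, eval_ofNat, Nat.cast_add, Nat.cast_one]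
    field_simp
    ring

lemma det_triToeplitz (n : ℕ) (a : ℝ) :
    (triToeplitz n a).det = ∏ k ∈ range n, (1 + 2 * a * cos ((k + 1) * π / (n + 1))) := by
  rcases eq_or_ne a 0 with rfl | ha
  · have : triToeplitz n 0 = 1 := by
      ext i j
      simp [triToeplitz_apply, one_apply, Fin.ext_iff]
    simp [this]
  · rw [det_triToeplitz_eq_eval_U ha, Polynomial.Chebyshev.eval_U_real_eq_prod, ← mul_assoc,
      ← mul_pow, show (-a * 2) ^ n = ∏ _k ∈ range n, (-a * 2) by simp, ← prod_mul_distrib]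
    refine prod_congr rfl fun k _ ↦ ?_
    field_simp
    ring

lemma one_add_two_mul_mul_cos_pos {a : ℝ} (ha : |a| < 1 / 2) (θ : ℝ) :
    0 < 1 + 2 * a * cos θ := by
  have : |2 * a * cos θ| < 1 := by
    rw [abs_mul, abs_mul, abs_two]
    linarith [mul_le_of_le_one_right (abs_nonneg a) (abs_cos_le_one θ)]
  linarith [neg_abs_le (2 * a * cos θ)]

lemma det_triToeplitz_pos (n : ℕ) {a : ℝ} (ha : |a| < 1 / 2) : 0 < (triToeplitz n a).det := by
  rw [det_triToeplitz]
  exact prod_pos fun _ _ ↦ one_add_two_mul_mul_cos_pos ha _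

lemma log_det_triToeplitz (n : ℕ) {a : ℝ} (ha : |a| < 1 / 2) :
    log (triToeplitz n a).det
      = ∑ i : Fin n, log (1 + 2 * a * cos (((i : ℕ) + 1 : ℝ) * π / ((n : ℝ) + 1))) := by
  rw [det_triToeplitz, log_prod fun _ _ ↦ (one_add_two_mul_mul_cos_pos ha _).ne',
    Fin.sum_univ_eq_sum_range (fun k ↦ log (1 + 2 * a * cos ((k + 1 : ℝ) * π / (n + 1))))]

lemma Matrix.IsSymm.mulVec_dotProduct {ι R : Type*} [Fintype ι] [CommSemiring R]
    {A : Matrix ι ι R} (hA : A.IsSymm) (u w : ι → R) : (A *ᵥ u) ⬝ᵥ w = u ⬝ᵥ (A *ᵥ w) := by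
  rw [dotProduct_mulVec, ← mulVec_transpose, hA.eq]

lemma Matrix.IsSymm.sub_mulVec_dotProduct_inv_mul_self {ι R : Type*} [Fintype ι]
    [DecidableEq ι] [CommRing R] {A : Matrix ι ι R} (hA : A.IsSymm) (hdet : IsUnit A.det)
    (μ x : ι → R) :
    (x - A *ᵥ μ) ⬝ᵥ ((A * A)⁻¹ *ᵥ (x - A *ᵥ μ))
      = x ⬝ᵥ ((A⁻¹ * A⁻¹) *ᵥ x) - 2 * (μ ⬝ᵥ (A⁻¹ *ᵥ x)) + μ ⬝ᵥ μ := by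
  have hcancel : (A⁻¹ * A⁻¹) *ᵥ (A *ᵥ μ) = A⁻¹ *ᵥ μ := by
    rw [mulVec_mulVec, Matrix.mul_assoc, nonsing_inv_mul A hdet, Matrix.mul_one]
  have hcross : (A *ᵥ μ) ⬝ᵥ ((A⁻¹ * A⁻¹) *ᵥ x) = μ ⬝ᵥ (A⁻¹ *ᵥ x) := by
    rw [hA.mulVec_dotProduct, mulVec_mulVec, ← Matrix.mul_assoc, mul_nonsing_inv A hdet,
      Matrix.one_mul]
  have hconst : (A *ᵥ μ) ⬝ᵥ (A⁻¹ *ᵥ μ) = μ ⬝ᵥ μ := by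
    rw [hA.mulVec_dotProduct, mulVec_mulVec, mul_nonsing_inv A hdet, one_mulVec]
  have hswap : x ⬝ᵥ (A⁻¹ *ᵥ μ) = μ ⬝ᵥ (A⁻¹ *ᵥ x) := by
    rw [dotProduct_comm, hA.inv.mulVec_dotProduct]
  rw [mul_inv_rev, mulVec_sub, hcancel, sub_dotProduct, dotProduct_sub, dotProduct_sub, hcross,
    hconst, hswap]
  ring

lemma gaussPDF_eq_exp {d : ℕ} (m : Fin d → ℝ) {S : Matrix (Fin d) (Fin d) ℝ} (hS : 0 < S.det)
    (x : Fin d → ℝ) :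
    gaussPDF m S x
      = exp (-(log ((2 * π) ^ (d : ℝ) * S.det) + (x - m) ⬝ᵥ (S⁻¹ *ᵥ (x - m))) / 2) := by
  rw [gaussPDF, rpow_def_of_pos (by positivity), ← exp_add]
  ring_nf

lemma gaussPDF_mulVec_mul_self {d : ℕ} {A : Matrix (Fin d) (Fin d) ℝ} (hA : A.IsSymm)
    (hdet : 0 < A.det) (μ x : Fin d → ℝ) :
    gaussPDF (A *ᵥ μ) (A * A) x
      = exp (-(log ((2 * π) ^ (d : ℝ)) + 2 * log A.det
          + (x ⬝ᵥ ((A⁻¹ * A⁻¹) *ᵥ x) - 2 * (μ ⬝ᵥ (A⁻¹ *ᵥ x)) + μ ⬝ᵥ μ)) / 2) := by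
  rw [gaussPDF_eq_exp _ (by rw [det_mul]; positivity),
    hA.sub_mulVec_dotProduct_inv_mul_self hdet.ne'.isUnit, det_mul,
    log_mul (by positivity) (by positivity), log_mul hdet.ne' hdet.ne']
  ring_nf

/-- For the balanced mixture where class `y ∈ {-1,+1}` has distribution `N(y A_y μ, A_y²)`
with `A_y = T(d; a_y, 1, a_y)`, the Bayes optimal decision boundary is the quadric
`xᵀAx + bᵀx + c = 0` with `A = A₋₁⁻² − A₁⁻²`, `b = 2(A₋₁⁻¹ + A₁⁻¹)μ`, and
`c = 2Σᵢ [ln(1 + 2a₋₁cos(iπ/(d+1))) − ln(1 + 2a₁cos(iπ/(d+1)))]`: the class `+1`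
conditional density exceeds (resp. equals) the class `-1` conditional density exactly where
the quadratic form is positive (resp. zero). -/
theorem bayes_boundary_quadric (d : ℕ) (μ : Fin d → ℝ) (a₁ aₘ : ℝ)
    (ha₁ : 0 ≤ a₁) (ha₁' : a₁ < 1 / 2) (haₘ : 0 ≤ aₘ) (haₘ' : aₘ < 1 / 2) :
    let A₁ := triToeplitz d a₁
    let Aₘ := triToeplitz d aₘ
    let A := Aₘ⁻¹ * Aₘ⁻¹ - A₁⁻¹ * A₁⁻¹
    let b := (2 : ℝ) • ((Aₘ⁻¹ + A₁⁻¹) *ᵥ μ)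
    let c := 2 * ∑ i : Fin d,
      (Real.log (1 + 2 * aₘ * Real.cos (((i : ℕ) + 1 : ℝ) * π / ((d : ℝ) + 1)))
        - Real.log (1 + 2 * a₁ * Real.cos (((i : ℕ) + 1 : ℝ) * π / ((d : ℝ) + 1))))
    ∀ x : Fin d → ℝ,
      (gaussPDF (A₁ *ᵥ μ) (A₁ * A₁) x > gaussPDF (-(Aₘ *ᵥ μ)) (Aₘ * Aₘ) x
          ↔ x ⬝ᵥ (A *ᵥ x) + b ⬝ᵥ x + c > 0) ∧
        (gaussPDF (A₁ *ᵥ μ) (A₁ * A₁) x = gaussPDF (-(Aₘ *ᵥ μ)) (Aₘ * Aₘ) x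
          ↔ x ⬝ᵥ (A *ᵥ x) + b ⬝ᵥ x + c = 0) := by
  intro A₁ Aₘ A b c x
  have hsymm₁ : A₁.IsSymm := triToeplitz_isSymm d a₁
  have hsymmₘ : Aₘ.IsSymm := triToeplitz_isSymm d aₘ
  have habs₁ : |a₁| < 1 / 2 := abs_lt.2 ⟨by linarith, ha₁'⟩
  have habsₘ : |aₘ| < 1 / 2 := abs_lt.2 ⟨by linarith, haₘ'⟩
  have hc : c = 2 * (log Aₘ.det - log A₁.det) := by
    rw [log_det_triToeplitz d habs₁, log_det_triToeplitz d habsₘ, ← sum_sub_distrib]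
  have hA : x ⬝ᵥ (A *ᵥ x) = x ⬝ᵥ ((Aₘ⁻¹ * Aₘ⁻¹) *ᵥ x) - x ⬝ᵥ ((A₁⁻¹ * A₁⁻¹) *ᵥ x) := by
    rw [sub_mulVec, dotProduct_sub]
  have hb : b ⬝ᵥ x = 2 * (μ ⬝ᵥ (Aₘ⁻¹ *ᵥ x)) + 2 * (μ ⬝ᵥ (A₁⁻¹ *ᵥ x)) := by
    rw [smul_dotProduct, (hsymmₘ.inv.add hsymm₁.inv).mulVec_dotProduct, add_mulVec,
      dotProduct_add, smul_eq_mul, mul_add]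
  rw [← mulVec_neg, gaussPDF_mulVec_mul_self hsymm₁ (det_triToeplitz_pos d habs₁),
    gaussPDF_mulVec_mul_self hsymmₘ (det_triToeplitz_pos d habsₘ), gt_iff_lt, gt_iff_lt,
    exp_lt_exp, exp_eq_exp, hA, hb, hc]
  simp only [neg_dotProduct, dotProduct_neg, neg_neg]
  constructor <;> constructor <;> intro h <;> linarith
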